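/- Let φ : [0,1] → ℝ be twice continuously differentiable. Then there exists C > 0 (depending only on φ) such that for all n ≥ 1 and all 1 ≤ m ≤ n, |Σ_{1≤ℓ≤m} λ*_{n,m,ℓ}·(φ(m/n) − φ((m−ℓ)/n)) − (φ'(m/n)/n)·Σ_{1≤ℓ≤m} ℓ·λ*_{n,m,ℓ}| ≤ C·n^{−2}. -/

import Mathlib

open Filter MeasureTheory Real

namespace EA

/-- The transition probability `λ_{n,m,ℓ}`. -/
noncomputable def lam (n m ℓ : ℕ) : ℝ :=
  (1 - 1/(n:ℝ))^n * ((n:ℝ) - 1)^(-(ℓ:ℤ)) *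
    ∑ j ∈ Finset.range (min (n - m) (m - ℓ) + 1),
      ((n - m).choose j : ℝ) * (m.choose (j + ℓ) : ℝ) * ((n:ℝ) - 1)^(-(2*(j:ℤ)))

/-- `Λ_{n,m} = Σ_{1 ≤ ℓ ≤ m} λ_{n,m,ℓ}`. -/
noncomputable def Lam (n m : ℕ) : ℝ := ∑ ℓ ∈ Finset.range m, lam n m (ℓ + 1)

/-- The probability generating function `P_{n,m}(t)` of `X_{n,m}`. -/
noncomputable def Pgen (n : ℕ) : ℕ → ℝ → ℝ
  | 0, _ => 1
  | (m+1), t =>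
      (t * ∑ ℓ ∈ Finset.range (m+1), lam n (m+1) (ℓ+1) * Pgen n (m - ℓ) t) /
        (1 - (1 - Lam n (m+1)) * t)
  decreasing_by exact Nat.lt_succ_of_le (Nat.sub_le m ℓ)

/-- The entire function `S_r(z)`. -/
noncomputable def S (r : ℕ) (z : ℝ) : ℝ :=
  ∑' ℓ : ℕ, (z^(ℓ+1) / (Nat.factorial (ℓ+1) : ℝ)) *
    ∑ j ∈ Finset.range (ℓ+1), ((ℓ + 1 - j : ℕ) : ℝ)^r * (1 - z)^j / (Nat.factorial j : ℝ)

/-- Harmonic numbers `H_m`. -/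
noncomputable def Hm (m : ℕ) : ℝ := ∑ j ∈ Finset.range m, 1/((j:ℝ)+1)

/-- Second-order harmonic numbers `H_m^{(2)}`. -/
noncomputable def Hm2 (m : ℕ) : ℝ := ∑ j ∈ Finset.range m, 1/((j:ℝ)+1)^2

/-- `φ₁(z) = ∫_0^z (1/S₁(t) - 1/t) dt`. -/
noncomputable def phi1 (z : ℝ) : ℝ := ∫ t in (0:ℝ)..z, (1 / S 1 t - 1 / t)

/-- `φ₂(z)`. -/
noncomputable def phi2 (z : ℝ) : ℝ :=
  1/2 - ∫ x in (0:ℝ)..z,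
    (S 2 x * deriv (S 1) x / (2 * (S 1 x)^3) - S 0 x / (S 1 x)^2
      - 1/(2 * S 1 x) - 1/(2*x^2) + 1/x)

/-- `ψ₁(z)`. -/
noncomputable def psi1 (z : ℝ) : ℝ :=
  ∫ x in (0:ℝ)..z, (S 2 x / (S 1 x)^3 - 1/x^2 + 2/x)

/-- `ψ₂(z)`. -/
noncomputable def psi2 (z : ℝ) : ℝ :=
  7/12 - ∫ x in (0:ℝ)..z,
    (5 * deriv (S 1) x * (S 2 x)^2 / (2*(S 1 x)^5)
      - (2 * deriv (S 1) x * S 3 x + S 2 x * deriv (S 2) x + 6 * S 0 x * S 2 x) / (2*(S 1 x)^4)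
      - S 0 x / (S 1 x)^3 + 2/(S 1 x)^2 - 1/x^3 + 3/x^2 - 11/(2*x))

/-- The mean sequence `μ_{n,m}`. -/
noncomputable def mu (n : ℕ) : ℕ → ℝ
  | 0 => 0
  | (m+1) =>
      (1 + ∑ ℓ ∈ Finset.range (m+1), lam n (m+1) (ℓ+1) * mu n (m - ℓ)) / Lam n (m+1)
  decreasing_by exact Nat.lt_succ_of_le (Nat.sub_le m ℓ)

/-- The variance sequence `σ²_{n,m}`, the unique solution of
`Σ_{1≤ℓ≤m} λ_{n,m,ℓ}(σ²_{n,m} − σ²_{n,m−ℓ}) = −1 + Σ_{1≤ℓ≤m} λ_{n,m,ℓ}(μ_{n,m} − μ_{n,m−ℓ})²`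
with `σ²_{n,0} = 0`. -/
noncomputable def varX (n : ℕ) : ℕ → ℝ
  | 0 => 0
  | (m+1) =>
      (-1 + ∑ ℓ ∈ Finset.range (m+1), lam n (m+1) (ℓ+1) *
          (varX n (m - ℓ) + (mu n (m+1) - mu n (m - ℓ))^2)) / Lam n (m+1)
  decreasing_by exact Nat.lt_succ_of_le (Nat.sub_le m ℓ)

/-- The normalized transition probability `λ*_{n,m,ℓ}`. -/
noncomputable def lamStar (n m ℓ : ℕ) : ℝ :=
  ∑ j ∈ Finset.range (min (n + 1 - m) (m - ℓ) + 1),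
    ((n + 1 - m).choose j : ℝ) * (m.choose (j + ℓ) : ℝ) * (n:ℝ)^(-((ℓ:ℤ) + 2*j))

/-- The probability generating function `Q_{n,m}` for LeadingOnes. -/
noncomputable def QLO (p : ℝ) (n : ℕ) : ℕ → ℝ → ℝ
  | 0, _ => 1
  | (m+1), t =>
      (p * (1-p)^(n-(m+1)) * t / (1 - (1 - p*(1-p)^(n-(m+1))) * t)) *
        ((2:ℝ)^(-(m:ℤ)) + ∑ ℓ ∈ Finset.range m, QLO p n (m-ℓ) t / 2^(ℓ+1))
  decreasing_by exact Nat.lt_succ_of_le (Nat.sub_le m ℓ)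

/-- The mean `ν_{n,m}` of `Y_{n,m}` (LeadingOnes). -/
noncomputable def nuLO (p : ℝ) (n : ℕ) : ℕ → ℝ
  | 0 => 0
  | (m+1) =>
      1/(p*(1-p)^(n-(m+1))) + ∑ ℓ ∈ Finset.range m, nuLO p n (m-ℓ) / 2^(ℓ+1)
  decreasing_by exact Nat.lt_succ_of_le (Nat.sub_le m ℓ)

/-- The second moment `s_{n,m}` of `Y_{n,m}` (LeadingOnes). -/
noncomputable def sLO (p : ℝ) (n : ℕ) : ℕ → ℝ
  | 0 => 0
  | (m+1) =>
      (2 * nuLO p n (m+1) - 1)/(p*(1-p)^(n-(m+1)))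
        + ∑ ℓ ∈ Finset.range m, sLO p n (m-ℓ) / 2^(ℓ+1)
/- A first-order Taylor estimate with remainder `K (y - x)²` holds for every `C²` function
`φ` on `[0, 1]`, `K` being a Lipschitz constant of `φ'`. Applied at `x = m/n`, `y = (m - ℓ)/n`
and weighted by `λ*_{n,m,ℓ}`, it bounds the left-hand side by `K n⁻² Σ ℓ² λ*_{n,m,ℓ}`.
Comparing binomial coefficients with powers gives `λ*_{n,m,ℓ} ≤ e/ℓ!`, so that second moment
is at most `Σ ℓ² e/ℓ! ≤ e³`, uniformly in `n` and `m`. -/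

open Set

theorem norm_sub_sub_smul_le_of_lipschitzOnWith {E : Type*} [NormedAddCommGroup E]
    [NormedSpace ℝ E] {f f' : ℝ → E} {s : Set ℝ} {K : NNReal} (hs : Convex ℝ s)
    (hf : ∀ t ∈ s, HasDerivWithinAt f (f' t) s t) (hf' : LipschitzOnWith K f' s)
    {x y : ℝ} (hx : x ∈ s) (hy : y ∈ s) :
    ‖f y - f x - (y - x) • f' x‖ ≤ K * (y - x) ^ 2 := by
  have hsub : uIcc x y ⊆ s := segment_eq_uIcc x y ▸ hs.segment_subset hx hy
  have hderiv : ∀ t ∈ uIcc x y,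
      HasDerivWithinAt (fun t ↦ f t - (t - x) • f' x) (f' t - f' x) (uIcc x y) t := by
    intro t ht
    have hlin := (((hasDerivAt_id t).sub_const x).smul_const (f' x)).hasDerivWithinAt
      (s := uIcc x y)
    rw [one_smul] at hlin
    exact ((hf t (hsub ht)).mono hsub).sub hlin
  have hbound : ∀ t ∈ uIcc x y, ‖f' t - f' x‖ ≤ K * |y - x| := fun t ht ↦
    calc ‖f' t - f' x‖ ≤ K * |t - x| := hf'.norm_sub_le (hsub ht) hx
      _ ≤ K * |y - x| := mul_le_mul_of_nonneg_left (abs_sub_left_of_mem_uIcc ht) K.coe_nonneg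
  have := (convex_uIcc x y).norm_image_sub_le_of_norm_hasDerivWithin_le hderiv hbound
    left_mem_uIcc right_mem_uIcc
  rw [sub_right_comm] at this
  simpa [Real.norm_eq_abs, mul_assoc, ← sq] using this

theorem natCast_div_natCast_mem_Icc {k n : ℕ} (h : k ≤ n) : (k / n : ℝ) ∈ Icc 0 1 :=
  ⟨by positivity, div_le_one_of_le₀ (by exact_mod_cast h) (by positivity)⟩

theorem abs_sub_sub_mul_le_of_lipschitzOnWith_derivWithin {φ : ℝ → ℝ} {K : NNReal}
    (hφ : DifferentiableOn ℝ φ (Icc 0 1))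
    (hK : LipschitzOnWith K (derivWithin φ (Icc 0 1)) (Icc 0 1)) {n m ℓ : ℕ}
    (hℓm : ℓ ≤ m) (hmn : m ≤ n) :
    |φ (m / n) - φ ((m - ℓ : ℕ) / n) - derivWithin φ (Icc 0 1) (m / n) * (ℓ / n)|
      ≤ K * (ℓ / n : ℝ) ^ 2 := by
  have key := norm_sub_sub_smul_le_of_lipschitzOnWith (convex_Icc 0 1)
    (fun t ht ↦ (hφ t ht).hasDerivWithinAt) hK (natCast_div_natCast_mem_Icc hmn)
    (natCast_div_natCast_mem_Icc ((m.sub_le ℓ).trans hmn))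
  have hdiff : ((m - ℓ : ℕ) / n : ℝ) - m / n = -(ℓ / n) := by
    rw [Nat.cast_sub hℓm]; ring
  rw [hdiff, Real.norm_eq_abs, smul_eq_mul, ← abs_neg] at key
  convert key using 2 <;> ring

theorem lamStar_nonneg (n m ℓ : ℕ) : 0 ≤ lamStar n m ℓ :=
  Finset.sum_nonneg fun _ _ ↦ by positivity

theorem lamStar_le_exp_one_div_factorial {n m : ℕ} (hm : 1 ≤ m) (hmn : m ≤ n) (ℓ : ℕ) :
    lamStar n m ℓ ≤ exp 1 / ℓ.factorial := by
  have hterm : ∀ j : ℕ, ((n + 1 - m).choose j : ℝ) * (m.choose (j + ℓ) : ℝ)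
      * (n : ℝ) ^ (-((ℓ : ℤ) + 2 * j)) ≤ 1 ^ j / j.factorial * (1 / ℓ.factorial) := by
    intro j
    have hn : (0 : ℝ) < n := by exact_mod_cast hm.trans hmn
    have h₁ : ((n + 1 - m).choose j : ℝ) ≤ (n : ℝ) ^ j / j.factorial :=
      (Nat.choose_le_pow_div j _).trans (by gcongr; exact_mod_cast (by omega : n + 1 - m ≤ n))
    have h₂ : (m.choose (j + ℓ) : ℝ) ≤ (n : ℝ) ^ (j + ℓ) / (j + ℓ).factorial :=
      (Nat.choose_le_pow_div _ m).trans (by gcongr)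
    have hpow :
        (n : ℝ) ^ (-((ℓ : ℤ) + 2 * j)) = ((n : ℝ) ^ j * (n : ℝ) ^ (j + ℓ))⁻¹ := by
      rw [← pow_add, ← zpow_natCast, ← zpow_neg]; push_cast; ring_nf
    have hfact : (ℓ.factorial : ℝ) ≤ (j + ℓ).factorial := by
      exact_mod_cast Nat.factorial_le (Nat.le_add_left ℓ j)
    calc _ ≤ (n : ℝ) ^ j / j.factorial * ((n : ℝ) ^ (j + ℓ) / (j + ℓ).factorial)
            * ((n : ℝ) ^ j * (n : ℝ) ^ (j + ℓ))⁻¹ := by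
          rw [hpow]; gcongr
      _ = 1 / j.factorial * (1 / (j + ℓ).factorial) := by field_simp
      _ ≤ 1 ^ j / j.factorial * (1 / ℓ.factorial) := by rw [one_pow]; gcongr
  calc lamStar n m ℓ
      ≤ ∑ j ∈ Finset.range (min (n + 1 - m) (m - ℓ) + 1),
          (1 : ℝ) ^ j / j.factorial * (1 / ℓ.factorial) :=
        Finset.sum_le_sum fun j _ ↦ hterm j
    _ ≤ exp 1 * (1 / ℓ.factorial) := by
        rw [← Finset.sum_mul]; gcongr; exact Real.sum_le_exp_of_nonneg zero_le_one _
    _ = exp 1 / ℓ.factorial := mul_one_div _ _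

theorem sum_sq_mul_lamStar_le_exp_three {n m : ℕ} (hm : 1 ≤ m) (hmn : m ≤ n) :
    ∑ ℓ ∈ Finset.range m, ((ℓ : ℝ) + 1) ^ 2 * lamStar n m (ℓ + 1) ≤ exp 3 := by
  have hterm : ∀ ℓ : ℕ,
      ((ℓ : ℝ) + 1) ^ 2 * lamStar n m (ℓ + 1) ≤ exp 1 * (2 ^ ℓ / ℓ.factorial) := by
    intro ℓ
    have htwo : (ℓ : ℝ) + 1 ≤ 2 ^ ℓ := by exact_mod_cast Nat.lt_two_pow_self
    calc ((ℓ : ℝ) + 1) ^ 2 * lamStar n m (ℓ + 1)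
        ≤ ((ℓ : ℝ) + 1) ^ 2 * (exp 1 / (ℓ + 1).factorial) := by
          gcongr; exact lamStar_le_exp_one_div_factorial hm hmn _
      _ = exp 1 * (((ℓ : ℝ) + 1) / ℓ.factorial) := by
          push_cast [Nat.factorial_succ]; field_simp
      _ ≤ exp 1 * (2 ^ ℓ / ℓ.factorial) := by gcongr
  calc ∑ ℓ ∈ Finset.range m, ((ℓ : ℝ) + 1) ^ 2 * lamStar n m (ℓ + 1)
      ≤ ∑ ℓ ∈ Finset.range m, exp 1 * (2 ^ ℓ / ℓ.factorial) :=
        Finset.sum_le_sum fun ℓ _ ↦ hterm ℓ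
    _ ≤ exp 1 * exp 2 := by
        rw [← Finset.mul_sum]; gcongr; exact Real.sum_le_exp_of_nonneg zero_le_two _
    _ = exp 3 := by rw [← exp_add]; norm_num

/-- Lemma 5 of the paper. -/
theorem smooth_sum_approximation (φ : ℝ → ℝ) (hφ : ContDiffOn ℝ 2 φ (Set.Icc 0 1)) :
    ∃ C : ℝ, 0 < C ∧ ∀ n : ℕ, 1 ≤ n → ∀ m : ℕ, 1 ≤ m → m ≤ n →
      |∑ ℓ ∈ Finset.range m, lamStar n m (ℓ+1) *
            (φ ((m:ℝ)/n) - φ (((m - (ℓ+1) : ℕ) : ℝ)/n))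
          - (derivWithin φ (Set.Icc 0 1) ((m:ℝ)/n) / n)
              * ∑ ℓ ∈ Finset.range m, ((ℓ:ℝ)+1) * lamStar n m (ℓ+1)|
        ≤ C / n^2 := by
  obtain ⟨K, hK⟩ := (hφ.derivWithin (uniqueDiffOn_Icc zero_lt_one) (by norm_num)
    ).exists_lipschitzOnWith one_ne_zero (convex_Icc 0 1) isCompact_Icc
  refine ⟨(K + 1) * exp 3, by positivity, fun n _ m hm hmn ↦ ?_⟩
  set d := derivWithin φ (Icc 0 1) (m / n)
  have htaylor (ℓ : ℕ) (hℓ : ℓ ∈ Finset.range m) :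
      |φ (m / n) - φ ((m - (ℓ + 1) : ℕ) / n) - d * (((ℓ : ℝ) + 1) / n)|
        ≤ K * (((ℓ : ℝ) + 1) / n) ^ 2 := by
    exact_mod_cast abs_sub_sub_mul_le_of_lipschitzOnWith_derivWithin (hφ.differentiableOn
      (by norm_num)) hK (Finset.mem_range.mp hℓ) hmn
  calc _ = |∑ ℓ ∈ Finset.range m, lamStar n m (ℓ + 1)
          * (φ (m / n) - φ ((m - (ℓ + 1) : ℕ) / n) - d * (((ℓ : ℝ) + 1) / n))| := by
        rw [Finset.mul_sum, ← Finset.sum_sub_distrib]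
        exact congrArg _ (Finset.sum_congr rfl fun ℓ _ ↦ by ring)
    _ ≤ ∑ ℓ ∈ Finset.range m, lamStar n m (ℓ + 1) * (K * (((ℓ : ℝ) + 1) / n) ^ 2) := by
        refine (Finset.abs_sum_le_sum_abs _ _).trans (Finset.sum_le_sum fun ℓ hℓ ↦ ?_)
        rw [abs_mul, abs_of_nonneg (lamStar_nonneg n m _)]
        exact mul_le_mul_of_nonneg_left (htaylor ℓ hℓ) (lamStar_nonneg n m _)
    _ = K / n ^ 2 * ∑ ℓ ∈ Finset.range m, ((ℓ : ℝ) + 1) ^ 2 * lamStar n m (ℓ + 1) := by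
        rw [Finset.mul_sum]; exact Finset.sum_congr rfl fun ℓ _ ↦ by ring
    _ ≤ K / n ^ 2 * exp 3 := by gcongr; exact sum_sq_mul_lamStar_le_exp_three hm hmn
    _ ≤ (K + 1) * exp 3 / n ^ 2 := by
        rw [div_mul_eq_mul_div]; gcongr; linarith

end EA
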